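/- Let n ≥ 1, let U ⊆ {u ∈ ℝⁿ : u_i ≠ u_j for i ≠ j} be open, let Φ : U → Mat_n(ℂ) be differentiable, and fix k ∈ {1,...,n} and u ∈ U. Define M_k(u) to be the matrix with entries (M_k)_{ij} = (δ_{ik} − δ_{jk})·Φ(u)_{ij}/(u_i − u_j) for i ≠ j and 0 for i = j, and set A(z,u) = i·diag(u) − (2πi·z)⁻¹·Φ(u) and B_k(z,u) = i·z·E_k − (2πi)⁻¹·M_k(u) for z ∈ ℂ∖{0}. Then the isomonodromy equation ∂Φ/∂u_k(u) = (2πi)⁻¹·(Φ(u)·M_k(u) − M_k(u)·Φ(u)) holds at u if and only if the zero-curvature (compatibility) equation ∂A/∂u_k(z,u) − ∂B_k/∂z(z,u) = B_k(z,u)·A(z,u) − A(z,u)·B_k(z,u) holds for every z ∈ ℂ∖{0}. -/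

import Mathlib

/-! Differentiating the coefficients, `∂A/∂u_k − ∂B_k/∂z = −(2πiz)⁻¹ ∂Φ/∂u_k`: the two `i E_k`
terms cancel. In the commutator `[B_k, A]` the term `[E_k, diag u]` vanishes, and the two mixed
terms cancel because `[diag u, M_k] = [E_k, Φ]` (this is what `M_k` is built for), leaving
`(2πi)⁻¹ (2πiz)⁻¹ [M_k, Φ]`. Cancelling the nonzero factor `(2πiz)⁻¹` gives the equivalence,
for every `z ≠ 0` at once. -/

open Matrix

open scoped Matrix.Norms.L2Operator

noncomputable section

/-- The matrix `M_k(u)` with entries `(δ_{ik} − δ_{jk})·Φ(u)_{ij}/(u_i − u_j)` off the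
diagonal and `0` on the diagonal. -/
def Mmat (n : ℕ) (u : Fin n → ℝ) (P : Matrix (Fin n) (Fin n) ℂ) (k : Fin n) :
    Matrix (Fin n) (Fin n) ℂ :=
  Matrix.of fun i j =>
    if i = j then 0
    else (((if i = k then 1 else 0) : ℂ) - (if j = k then 1 else 0)) *
      P i j / ((u i : ℂ) - (u j : ℂ))

/-- `A(z,u) = i·diag(u) − (2πi·z)⁻¹·Φ(u)`. -/
def Acoef (n : ℕ) (Φ : (Fin n → ℝ) → Matrix (Fin n) (Fin n) ℂ) (z : ℂ)
    (u : Fin n → ℝ) : Matrix (Fin n) (Fin n) ℂ :=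
  Complex.I • Matrix.diagonal (fun i => (u i : ℂ)) -
    (2 * (Real.pi : ℂ) * Complex.I * z)⁻¹ • Φ u

/-- `B_k(z,u) = i·z·E_k − (2πi)⁻¹·M_k(u)`. -/
def Bcoef (n : ℕ) (Φ : (Fin n → ℝ) → Matrix (Fin n) (Fin n) ℂ) (k : Fin n)
    (u : Fin n → ℝ) (z : ℂ) : Matrix (Fin n) (Fin n) ℂ :=
  (Complex.I * z) • Matrix.single k k (1 : ℂ) -
    (2 * (Real.pi : ℂ) * Complex.I)⁻¹ • Mmat n u (Φ u) k

theorem lie_smul_sub_smul_eq_smul_lie {𝕜 R : Type*} [CommRing 𝕜] [Ring R] [Algebra 𝕜 R]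
    {α β γ c : 𝕜} (hαγ : α * γ = c * β) {d E M P : R} (hEd : Commute E d)
    (hdM : ⁅d, M⁆ = ⁅E, P⁆) :
    ⁅α • E - c • M, β • d - γ • P⁆ = (c * γ) • ⁅M, P⁆ := by
  rw [Ring.lie_def, Ring.lie_def, sub_eq_iff_eq_add] at hdM
  simp only [Ring.lie_def, sub_mul, mul_sub, smul_mul_smul_comm, hEd.eq, hdM]
  linear_combination (norm := module) -(hαγ • (E * P - P * E))

theorem lie_diagonal_apply {m R : Type*} [Fintype m] [DecidableEq m] [CommRing R]
    (a : m → R) (X : Matrix m m R) (i j : m) :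
    ⁅diagonal a, X⁆ i j = (a i - a j) * X i j := by
  rw [Ring.lie_def, Matrix.sub_apply, diagonal_mul, mul_diagonal]
  ring

theorem lie_diagonal_Mmat {n : ℕ} {u : Fin n → ℝ} (hu : Function.Injective u)
    (P : Matrix (Fin n) (Fin n) ℂ) (k : Fin n) :
    ⁅diagonal (fun i => (u i : ℂ)), Mmat n u P k⁆ = ⁅single k k (1 : ℂ), P⁆ := by
  ext i j
  rw [← diagonal_single, lie_diagonal_apply, lie_diagonal_apply, Mmat, of_apply]
  rcases eq_or_ne i j with rfl | hij
  · simp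
  · have hne : (u i : ℂ) - u j ≠ 0 := sub_ne_zero.mpr (by exact_mod_cast hu.ne hij)
    simp only [if_neg hij, Pi.single_apply]
    field_simp

theorem diagonal_ofReal_update {n : ℕ} (u : Fin n → ℝ) (k : Fin n) (s : ℝ) :
    diagonal (fun i => (Function.update u k s i : ℂ)) =
      diagonal (fun i => (u i : ℂ)) + ((s : ℂ) - u k) • single k k 1 := by
  rw [smul_single, smul_eq_mul, mul_one, ← diagonal_single, diagonal_add]
  congr 1
  ext i
  rcases eq_or_ne i k with rfl | hik <;> simp [*]

theorem hasDerivAt_Acoef_update {n : ℕ} {Φ : (Fin n → ℝ) → Matrix (Fin n) (Fin n) ℂ}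
    (z : ℂ) {k : Fin n} {u : Fin n → ℝ} {D : Matrix (Fin n) (Fin n) ℂ}
    (hD : HasDerivAt (fun s => Φ (Function.update u k s)) D (u k)) :
    HasDerivAt (fun s => Acoef n Φ z (Function.update u k s))
      (Complex.I • single k k 1 - (2 * (Real.pi : ℂ) * Complex.I * z)⁻¹ • D) (u k) := by
  simp only [Acoef, diagonal_ofReal_update]
  have hdiag := (((hasDerivAt_id (u k)).ofReal_comp.sub_const (u k : ℂ)).smul_const
    (single k k (1 : ℂ))).const_add (diagonal fun i => (u i : ℂ))
  simp only [Function.id_def, Complex.ofReal_one, one_smul] at hdiag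
  exact (hdiag.const_smul Complex.I).sub (hD.const_smul (2 * (Real.pi : ℂ) * Complex.I * z)⁻¹)

theorem hasDerivAt_Bcoef {n : ℕ} (Φ : (Fin n → ℝ) → Matrix (Fin n) (Fin n) ℂ) (k : Fin n)
    (u : Fin n → ℝ) (z : ℂ) :
    HasDerivAt (fun w => Bcoef n Φ k u w) (Complex.I • single k k 1) z := by
  simpa [Bcoef] using (((hasDerivAt_id z).const_mul Complex.I).smul_const
    (single k k (1 : ℂ))).sub_const ((2 * (Real.pi : ℂ) * Complex.I)⁻¹ • Mmat n u (Φ u) k)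

theorem zeroCurvature_iff {n : ℕ} {Φ : (Fin n → ℝ) → Matrix (Fin n) (Fin n) ℂ} {k : Fin n}
    {u : Fin n → ℝ} (hu : Function.Injective u) {D : Matrix (Fin n) (Fin n) ℂ}
    (hD : HasDerivAt (fun s => Φ (Function.update u k s)) D (u k)) {z : ℂ} (hz : z ≠ 0) :
    (∃ A' B' : Matrix (Fin n) (Fin n) ℂ,
        HasDerivAt (fun s => Acoef n Φ z (Function.update u k s)) A' (u k) ∧
        HasDerivAt (fun w => Bcoef n Φ k u w) B' z ∧
        A' - B' = Bcoef n Φ k u z * Acoef n Φ z u - Acoef n Φ z u * Bcoef n Φ k u z) ↔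
      D = (2 * (Real.pi : ℂ) * Complex.I)⁻¹ •
        (Φ u * Mmat n u (Φ u) k - Mmat n u (Φ u) k * Φ u) := by
  set c := (2 * (Real.pi : ℂ) * Complex.I)⁻¹
  set γ := (2 * (Real.pi : ℂ) * Complex.I * z)⁻¹
  have hγ : γ ≠ 0 := by simp [γ, hz, Real.pi_ne_zero, Complex.I_ne_zero]
  have hEd : Commute (single k k (1 : ℂ)) (diagonal fun i => (u i : ℂ)) := by
    rw [← diagonal_single]
    exact commute_diagonal _ _
  have hαγ : Complex.I * z * γ = c * Complex.I := by
    simp only [γ, c]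
    field_simp
  have hcurv : Bcoef n Φ k u z * Acoef n Φ z u - Acoef n Φ z u * Bcoef n Φ k u z =
      -γ • (c • (Φ u * Mmat n u (Φ u) k - Mmat n u (Φ u) k * Φ u)) := by
    have h := lie_smul_sub_smul_eq_smul_lie hαγ hEd (lie_diagonal_Mmat hu (Φ u) k)
    simp only [Ring.lie_def] at h
    rw [Bcoef, Acoef, h]
    module
  have hA := hasDerivAt_Acoef_update z hD
  have hB := hasDerivAt_Bcoef Φ k u z
  rw [hcurv]
  constructor
  · rintro ⟨A', B', hA', hB', h⟩
    rw [hA'.unique hA, hB'.unique hB, sub_sub_cancel_left, neg_smul, neg_inj] at h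
    exact smul_right_injective _ hγ h
  · rintro rfl
    exact ⟨_, _, hA, hB, by rw [sub_sub_cancel_left, neg_smul]⟩

theorem stmt8_general (n : ℕ) (U : Set (Fin n → ℝ))
    (hUreg : ∀ u ∈ U, ∀ i j : Fin n, i ≠ j → u i ≠ u j)
    (Φ : (Fin n → ℝ) → Matrix (Fin n) (Fin n) ℂ)
    (k : Fin n) (u : Fin n → ℝ) (hu : u ∈ U)
    (D : Matrix (Fin n) (Fin n) ℂ)
    (hD : HasDerivAt (fun s => Φ (Function.update u k s)) D (u k)) :
    (D = (2 * (Real.pi : ℂ) * Complex.I)⁻¹ •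
        (Φ u * Mmat n u (Φ u) k - Mmat n u (Φ u) k * Φ u)) ↔
    (∀ z : ℂ, z ≠ 0 →
      ∃ A' B' : Matrix (Fin n) (Fin n) ℂ,
        HasDerivAt (fun s => Acoef n Φ z (Function.update u k s)) A' (u k) ∧
        HasDerivAt (fun w => Bcoef n Φ k u w) B' z ∧
        A' - B' = Bcoef n Φ k u z * Acoef n Φ z u - Acoef n Φ z u * Bcoef n Φ k u z) := by
  have hinj : Function.Injective u := fun i j h => by_contra fun hij => hUreg u hu i j hij h
  exact ⟨fun h z hz => (zeroCurvature_iff hinj hD hz).mpr h,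
    fun h => (zeroCurvature_iff hinj hD one_ne_zero).mp (h 1 one_ne_zero)⟩

/-- The isomonodromy equation `∂Φ/∂u_k = (2πi)⁻¹[Φ, ad_u⁻¹ ad_{E_k} Φ]` at `u` is
equivalent to the zero-curvature equation
`∂A/∂u_k − ∂B_k/∂z = B_k·A − A·B_k` for every `z ≠ 0`. -/
theorem stmt8 (n : ℕ) (hn : 1 ≤ n) (U : Set (Fin n → ℝ)) (hU : IsOpen U)
    (hUreg : ∀ u ∈ U, ∀ i j : Fin n, i ≠ j → u i ≠ u j)
    (Φ : (Fin n → ℝ) → Matrix (Fin n) (Fin n) ℂ)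
    (hΦ : DifferentiableOn ℝ Φ U)
    (k : Fin n) (u : Fin n → ℝ) (hu : u ∈ U)
    (D : Matrix (Fin n) (Fin n) ℂ)
    (hD : HasDerivAt (fun s => Φ (Function.update u k s)) D (u k)) :
    (D = (2 * (Real.pi : ℂ) * Complex.I)⁻¹ •
        (Φ u * Mmat n u (Φ u) k - Mmat n u (Φ u) k * Φ u)) ↔
    (∀ z : ℂ, z ≠ 0 →
      ∃ A' B' : Matrix (Fin n) (Fin n) ℂ,
        HasDerivAt (fun s => Acoef n Φ z (Function.update u k s)) A' (u k) ∧
        HasDerivAt (fun w => Bcoef n Φ k u w) B' z ∧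
        A' - B' = Bcoef n Φ k u z * Acoef n Φ z u - Acoef n Φ z u * Bcoef n Φ k u z) :=
  stmt8_general n U hUreg Φ k u hu D hD
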